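/- arXiv:2110.03401 — 9 statements merged into one kernel-verified Lean document; each statement's English description precedes it below -/
import Mathlib

section
/- If a multiplicative function f : ℕ → ℂ has period m, satisfies f(m) ≠ 0, and has bounded partial sums, then the following three conditions hold: (i) for some prime q dividing m, ∑_{k=0}^∞ f(q^k)/q^k = 0; (ii) for each prime power p^a exactly dividing m, f(p^k) = f(p^a) for all k ≥ a; (iii) for each prime p with gcd(p,m) = 1, f(p^k) = 1 for all k ≥ 1. -/
/-- `f` is multiplicative: `f 1 = 1` and `f (m*n) = f m * f n` for coprime `m, n`. -/
def IsMultiplicativeFn (f : ℕ → ℂ) : Prop :=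
  f 1 = 1 ∧ ∀ m n : ℕ, Nat.Coprime m n → f (m * n) = f m * f n

/-- `f` has bounded partial sums. -/
def HasBoundedPartialSums (f : ℕ → ℂ) : Prop :=
  ∃ C : ℝ, 0 < C ∧ ∀ N : ℕ, 1 ≤ N → ‖∑ n ∈ Finset.Icc 1 N, f n‖ ≤ C

/-!
For `n` coprime to `m`, periodicity gives `f n * f m = f (n * m) = f m`, so `f n = 1`; this is
(iii). Likewise (ii) holds because `p ^ k * m'` and `p ^ a * m'` are congruent modulo
`m = p ^ a * m'`, with `f m' ≠ 0`.

For (i), Abel summation bounds the Dirichlet series `L(s) = ∑ f(n) n^{-s}` uniformly in `s > 1`.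
Splitting off the primes `q ∣ m` gives `L(s) = ∏_{q ∣ m} F_q(s) · ∑_{(n, m) = 1} n^{-s}`, where
`F_q(s) → ∑_k f(q^k) / q^k` as `s → 1⁺` while the last factor diverges like the harmonic series
on the residue class `1 mod m`. Hence some `∑_k f(q^k) / q^k` vanishes.
-/

open Filter Topology Finset

section Periodic

variable {f : ℕ → ℂ} {m : ℕ}

theorem apply_add_mul_of_periodic (hper : ∀ n : ℕ, 1 ≤ n → f (n + m) = f n)
    (j : ℕ) {n : ℕ} (hn : 1 ≤ n) : f (n + j * m) = f n := by
  induction j with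
  | zero => simp
  | succ j ih => rw [add_one_mul, ← add_assoc, hper _ (by omega), ih]

theorem exists_norm_le_of_periodic (hm : 1 ≤ m) (hper : ∀ n : ℕ, 1 ≤ n → f (n + m) = f n) :
    ∃ M : ℝ, ∀ n, ‖f n‖ ≤ M := by
  have hrep : ∀ n, ∃ j ∈ range (m + 1), f n = f j := by
    rintro (_ | n)
    · exact ⟨0, by simp, rfl⟩
    · refine ⟨n % m + 1, mem_range.2 (by have := Nat.mod_lt n hm; omega), ?_⟩
      conv_lhs => rw [← Nat.mod_add_div n m, add_right_comm, mul_comm]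
      exact apply_add_mul_of_periodic hper _ le_add_self
  refine ⟨∑ j ∈ range (m + 1), ‖f j‖, fun n => ?_⟩
  obtain ⟨j, hj, hfj⟩ := hrep n
  exact hfj ▸ single_le_sum (fun i _ => norm_nonneg (f i)) hj

namespace IsMultiplicativeFn

theorem eq_one_of_coprime (hmul : IsMultiplicativeFn f) (hm : 1 ≤ m)
    (hper : ∀ n : ℕ, 1 ≤ n → f (n + m) = f n) (hfm : f m ≠ 0) {n : ℕ} (hn : n ≠ 0)
    (hnm : n.Coprime m) : f n = 1 := by
  have hnm_eq : f (n * m) = f m := by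
    obtain ⟨k, rfl⟩ := Nat.exists_eq_add_of_le' (Nat.one_le_iff_ne_zero.2 hn)
    rw [add_one_mul, add_comm]
    exact apply_add_mul_of_periodic hper k hm
  rw [hmul.2 n m hnm] at hnm_eq
  exact mul_right_cancel₀ hfm (hnm_eq.trans (one_mul _).symm)

theorem apply_prime_pow_eq_of_le (hmul : IsMultiplicativeFn f)
    (hper : ∀ n : ℕ, 1 ≤ n → f (n + m) = f n) (hfm : f m ≠ 0) {p a : ℕ} (hp : p.Prime)
    (hpa : p ^ a ∣ m) (hpa1 : ¬ p ^ (a + 1) ∣ m) {k : ℕ} (hk : a ≤ k) :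
    f (p ^ k) = f (p ^ a) := by
  obtain ⟨m', rfl⟩ := hpa
  have hpm' : ¬ p ∣ m' := fun h => hpa1 (pow_succ p a ▸ mul_dvd_mul_left _ h)
  have hm' : m' ≠ 0 := by rintro rfl; exact hpm' (dvd_zero p)
  have hcop (j : ℕ) : (p ^ j).Coprime m' := (hp.coprime_iff_not_dvd.2 hpm').pow_left j
  have hfm' : f m' ≠ 0 := fun h => hfm (by rw [hmul.2 _ _ (hcop a), h, mul_zero])
  obtain ⟨u, hu⟩ := Nat.exists_eq_add_of_le' (Nat.one_le_pow (k - a) p hp.pos)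
  have hshift : p ^ k * m' = p ^ a * m' + u * (p ^ a * m') := by
    rw [← Nat.add_sub_cancel' hk, pow_add, hu]; ring
  have h := apply_add_mul_of_periodic hper u (n := p ^ a * m')
    (Nat.one_le_iff_ne_zero.2 (mul_ne_zero (pow_ne_zero _ hp.ne_zero) hm'))
  rw [← hshift, hmul.2 _ _ (hcop k), hmul.2 _ _ (hcop a)] at h
  exact mul_right_cancel₀ hfm' h

end IsMultiplicativeFn

end Periodic

theorem norm_sum_range_smul_le_of_antitone {E : Type*} [NormedAddCommGroup E] [NormedSpace ℝ E]
    {t : ℕ → ℝ} {a : ℕ → E} {C : ℝ} (ht : Antitone t) (ht0 : ∀ i, 0 ≤ t i)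
    (ha : ∀ N, ‖∑ i ∈ range N, a i‖ ≤ C) (N : ℕ) :
    ‖∑ i ∈ range N, t i • a i‖ ≤ t 0 * C := by
  have hdiff (i : ℕ) : ‖(t (i + 1) - t i) • ∑ j ∈ range (i + 1), a j‖ ≤ (t i - t (i + 1)) * C := by
    rw [norm_smul, Real.norm_eq_abs, abs_sub_comm, abs_of_nonneg (sub_nonneg.2 (ht i.le_succ))]
    exact mul_le_mul_of_nonneg_left (ha _) (sub_nonneg.2 (ht i.le_succ))
  rw [sum_range_by_parts]
  calc ‖t (N - 1) • ∑ i ∈ range N, a i -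
        ∑ i ∈ range (N - 1), (t (i + 1) - t i) • ∑ j ∈ range (i + 1), a j‖
      ≤ t (N - 1) * C + ∑ i ∈ range (N - 1), (t i - t (i + 1)) * C := by
        refine (norm_sub_le _ _).trans
          (add_le_add ?_ ((norm_sum_le _ _).trans (sum_le_sum fun i _ => hdiff i)))
        rw [norm_smul, Real.norm_of_nonneg (ht0 _)]
        exact mul_le_mul_of_nonneg_left (ha N) (ht0 _)
    _ = t 0 * C := by rw [← sum_mul, sum_range_sub']; ring

theorem HasBoundedPartialSums.exists_norm_tsum_mul_rpow_neg_le {f : ℕ → ℂ}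
    (hf : HasBoundedPartialSums f) :
    ∃ C : ℝ, ∀ s : ℝ, 0 < s → Summable (fun n : ℕ => f n * ↑((n : ℝ) ^ (-s))) →
      ‖∑' n : ℕ, f n * ↑((n : ℝ) ^ (-s))‖ ≤ C := by
  obtain ⟨C, hC0, hC⟩ := hf
  refine ⟨C, fun s hs hsum => ?_⟩
  have hpartial (N : ℕ) : ‖∑ i ∈ range N, f (i + 1)‖ ≤ C := by
    rcases N with _ | N
    · simpa using hC0.le
    · rw [range_eq_Ico, sum_Ico_add' f, zero_add, Ico_add_one_right_eq_Icc]
      exact hC _ le_add_self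
  have hanti : Antitone fun i : ℕ => ((i + 1 : ℕ) : ℝ) ^ (-s) := fun i j hij =>
    Real.rpow_le_rpow_of_nonpos (by positivity) (by gcongr) (by linarith)
  have hterm (i : ℕ) : f (i + 1) * ↑(((i + 1 : ℕ) : ℝ) ^ (-s)) =
      ((i + 1 : ℕ) : ℝ) ^ (-s) • f (i + 1) := by
    rw [Complex.real_smul, mul_comm]
  rw [hsum.tsum_eq_zero_add, Nat.cast_zero, Real.zero_rpow (by linarith), Complex.ofReal_zero,
    mul_zero, zero_add]
  simp only [hterm]
  refine le_of_tendsto' (((summable_nat_add_iff 1).2 hsum).congr hterm).hasSum.tendsto_sum_nat.norm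
    fun N => ?_
  simpa using norm_sum_range_smul_le_of_antitone hanti (fun i => by positivity) hpartial N

theorem Nat.factorization_pow_mul_of_not_dvd {q r : ℕ} (hq : q.Prime) (hr : ¬ q ∣ r) (k : ℕ) :
    (q ^ k * r).factorization q = k := by
  have hr0 : r ≠ 0 := by rintro rfl; exact hr (dvd_zero q)
  rw [Nat.factorization_mul (pow_ne_zero _ hq.ne_zero) hr0, Finsupp.add_apply,
    hq.factorization_pow, Finsupp.single_eq_same, Nat.factorization_eq_zero_of_not_dvd hr, add_zero]

section EulerFactor

variable {R : Type*} [NormedCommRing R] [CompleteSpace R] {g : ℕ → R}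

theorem tsum_eq_tsum_prime_pow_mul_tsum_indicator (hg : Summable g) (hg0 : g 0 = 0)
    (hgmul : ∀ a b, a.Coprime b → g (a * b) = g a * g b) {q : ℕ} (hq : q.Prime) :
    ∑' n, g n = (∑' k, g (q ^ k)) * ∑' n, {n | ¬ q ∣ n}.indicator g n := by
  set split : ℕ × {r // ¬ q ∣ r} → ℕ := fun x => q ^ x.1 * x.2
  have hinj : Function.Injective split := by
    rintro ⟨k, r, hr⟩ ⟨k', r', hr'⟩ h
    have h' : q ^ k * r = q ^ k' * r' := h
    obtain rfl : k = k' := by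
      rw [← Nat.factorization_pow_mul_of_not_dvd hq hr k,
        ← Nat.factorization_pow_mul_of_not_dvd hq hr' k', h']
    obtain rfl : r = r' := Nat.eq_of_mul_eq_mul_left (pow_pos hq.pos k) h'
    rfl
  have hrange : Function.support g ⊆ Set.range split := by
    intro n hn
    have hn0 : n ≠ 0 := by rintro rfl; exact hn hg0
    exact ⟨(n.factorization q, ⟨_, Nat.not_dvd_ordCompl hq hn0⟩),
      Nat.ordProj_mul_ordCompl_eq_self n q⟩
  have hsplit (x : ℕ × {r // ¬ q ∣ r}) : g (split x) = g (q ^ x.1) * g x.2 :=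
    hgmul _ _ ((hq.coprime_iff_not_dvd.2 x.2.2).pow_left _)
  have hsub : Summable fun r : {r // ¬ q ∣ r} => g r := hg.comp_injective Subtype.val_injective
  have hpow : Summable fun k => g (q ^ k) := hg.comp_injective (Nat.pow_right_injective hq.two_le)
  calc ∑' n, g n = ∑' x : ℕ × {r // ¬ q ∣ r}, g (q ^ x.1) * g x.2 := by
        rw [← hinj.tsum_eq hrange]; exact tsum_congr hsplit
    _ = ∑' (k) (r : {r // ¬ q ∣ r}), g (q ^ k) * g r := by
        have hprod : Summable fun x : ℕ × {r // ¬ q ∣ r} => g (q ^ x.1) * g x.2 :=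
          (hg.comp_injective hinj).congr hsplit
        exact hprod.tsum_prod' fun k => hsub.mul_left (g (q ^ k))
    _ = (∑' k, g (q ^ k)) * ∑' n, {n | ¬ q ∣ n}.indicator g n := by
        rw [tsum_congr fun k => hsub.tsum_mul_left (g (q ^ k)), hpow.tsum_mul_right]
        exact congrArg _ (_root_.tsum_subtype {n | ¬ q ∣ n} g)

theorem tsum_eq_prod_tsum_prime_pow_mul_tsum_indicator (hg : Summable g) (hg0 : g 0 = 0)
    (hgmul : ∀ a b, a.Coprime b → g (a * b) = g a * g b) (Q : Finset ℕ)
    (hQ : ∀ q ∈ Q, q.Prime) :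
    ∑' n, g n = (∏ q ∈ Q, ∑' k, g (q ^ k)) * ∑' n, {n | ∀ q ∈ Q, ¬ q ∣ n}.indicator g n := by
  classical
  induction Q using Finset.induction_on generalizing g with
  | empty => simp
  | @insert p Q hpQ ih =>
    have hp : p.Prime := hQ p (mem_insert_self p Q)
    set g' := {n | ¬ p ∣ n}.indicator g
    have hg'mul (a b : ℕ) (hab : a.Coprime b) : g' (a * b) = g' a * g' b := by
      simp only [g', Set.indicator_apply, Set.mem_ofPred_eq, hp.dvd_mul, not_or]
      split_ifs <;> simp_all [hgmul a b hab]
    have hg'pow : ∀ q ∈ Q, ∀ k, g' (q ^ k) = g (q ^ k) := by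
      intro q hq k
      refine Set.indicator_of_mem (s := {n | ¬ p ∣ n}) (fun hpq => hpQ ?_) g
      rwa [(Nat.prime_dvd_prime_iff_eq hp (hQ q (mem_insert_of_mem hq))).1
        (hp.dvd_of_dvd_pow hpq)]
    rw [tsum_eq_tsum_prime_pow_mul_tsum_indicator hg hg0 hgmul hp,
      ih (hg.indicator _) (by simp) hg'mul fun q hq => hQ q (mem_insert_of_mem hq),
      prod_insert hpQ, prod_congr rfl fun q hq => tsum_congr (hg'pow q hq), Set.indicator_indicator]
    simp only [mem_insert, forall_eq_or_imp, ← Set.ofPred_and, and_comm, mul_assoc]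

end EulerFactor

theorem summable_mul_rpow_neg_of_norm_le {f : ℕ → ℂ} {M : ℝ} (hM : ∀ n, ‖f n‖ ≤ M) {s : ℝ}
    (hs : 1 < s) : Summable fun n : ℕ => f n * ↑((n : ℝ) ^ (-s)) := by
  refine Summable.of_norm_bounded
    ((Real.summable_nat_rpow.2 (by linarith : -s < -1)).mul_left M) fun n => ?_
  rw [norm_mul, Complex.norm_real, Real.norm_of_nonneg (by positivity)]
  exact mul_le_mul_of_nonneg_right (hM n) (by positivity)

theorem tendsto_tsum_mul_pow_rpow_neg {c : ℕ → ℂ} {M : ℝ} (hM : ∀ k, ‖c k‖ ≤ M) {q : ℕ}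
    (hq : 1 < q) :
    Tendsto (fun s : ℝ => ∑' k, c k * ↑(((q ^ k : ℕ) : ℝ) ^ (-s))) (𝓝[>] 1)
      (𝓝 (∑' k, c k / (q : ℂ) ^ k)) := by
  have hq' : (1 : ℝ) < q := by exact_mod_cast hq
  have hM0 : 0 ≤ M := (norm_nonneg _).trans (hM 0)
  refine tendsto_tsum_of_dominated_convergence (bound := fun k => M * ((q : ℝ)⁻¹) ^ k)
    ((summable_geometric_of_lt_one (by positivity) (inv_lt_one_of_one_lt₀ hq')).mul_left M)
    (fun k => ?_) ?_
  · have hcont : ContinuousAt (fun s : ℝ => c k * ↑(((q ^ k : ℕ) : ℝ) ^ (-s))) 1 :=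
      continuousAt_const.mul (Complex.continuous_ofReal.continuousAt.comp
        ((Real.continuousAt_const_rpow (by positivity)).comp continuous_neg.continuousAt))
    convert hcont.tendsto.mono_left nhdsWithin_le_nhds using 2
    simp [Real.rpow_neg_one, div_eq_mul_inv]
  · filter_upwards [self_mem_nhdsWithin] with s (hs : 1 < s) k
    rw [norm_mul, Complex.norm_real, Real.norm_of_nonneg (by positivity)]
    refine mul_le_mul (hM k) ?_ (by positivity) hM0
    calc ((q ^ k : ℕ) : ℝ) ^ (-s) ≤ ((q ^ k : ℕ) : ℝ) ^ (-1 : ℝ) :=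
          Real.rpow_le_rpow_of_exponent_le (by exact_mod_cast Nat.one_le_pow _ _ (by omega))
            (by linarith)
      _ = ((q : ℝ)⁻¹) ^ k := by simp [Real.rpow_neg_one]

theorem tendsto_tsum_indicator_rpow_neg_atTop {S : Set ℕ}
    (hS : ¬ Summable (S.indicator fun n : ℕ => 1 / (n : ℝ))) :
    Tendsto (fun s : ℝ => ∑' n, S.indicator (fun n : ℕ => (n : ℝ) ^ (-s)) n) (𝓝[>] 1) atTop := by
  rw [tendsto_atTop]
  intro B
  obtain ⟨N, hN⟩ := (((not_summable_iff_tendsto_nat_atTop_of_nonneg fun n =>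
    Set.indicator_nonneg (fun n _ => by positivity) n).1 hS).eventually_gt_atTop B).exists
  have hcont : ContinuousAt
      (fun s : ℝ => ∑ n ∈ range N, S.indicator (fun n : ℕ => (n : ℝ) ^ (-s)) n) 1 := by
    refine tendsto_finsetSum _ fun n _ => ?_
    by_cases hn : n ∈ S
    · simp only [Set.indicator_of_mem hn]
      exact (Real.continuousAt_const_rpow' (by norm_num)).comp continuous_neg.continuousAt
    · simp only [Set.indicator_of_notMem hn]
      exact continuousAt_const
  have hval : ∑ n ∈ range N, S.indicator (fun n : ℕ => (n : ℝ) ^ (-(1 : ℝ))) n =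
      ∑ n ∈ range N, S.indicator (fun n : ℕ => 1 / (n : ℝ)) n := by
    simp [Real.rpow_neg_one]
  filter_upwards [(hcont.eventually (lt_mem_nhds (hval ▸ hN))).filter_mono nhdsWithin_le_nhds,
    self_mem_nhdsWithin] with s hBs (hs : 1 < s)
  exact hBs.le.trans (Summable.sum_le_tsum _ (fun n _ => Set.indicator_nonneg
    (fun n _ => by positivity) n) ((Real.summable_nat_rpow.2 (by linarith : -s < -1)).indicator S))

theorem not_summable_indicator_coprime_one_div {m : ℕ} (hm : m ≠ 0) :
    ¬ Summable ({n | n.Coprime m}.indicator fun n : ℕ => 1 / (n : ℝ)) := fun h =>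
  Real.not_summable_indicator_one_div_natCast hm 1 <|
    h.of_nonneg_of_le (fun n => Set.indicator_nonneg (fun n _ => by positivity) n)
      (Set.indicator_le_indicator_of_subset
        (fun n (hn : (n : ZMod m) = 1) => (ZMod.isUnit_iff_coprime n m).1 (hn ▸ isUnit_one))
        fun n => by positivity)

theorem Nat.coprime_iff_forall_mem_primeFactors_not_dvd {n m : ℕ} (hm : m ≠ 0) :
    n.Coprime m ↔ ∀ q ∈ m.primeFactors, ¬ q ∣ n := by
  rw [← not_not (a := n.Coprime m), Nat.Prime.not_coprime_iff_dvd]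
  simp only [Nat.mem_primeFactors, hm, ne_eq, not_false_eq_true, and_true, not_exists, not_and]
  exact ⟨fun h q ⟨hq, hqm⟩ hqn => h q hq hqn hqm, fun h q hq hqn hqm => h q ⟨hq, hqm⟩ hqn⟩

theorem IsMultiplicativeFn.tsum_mul_rpow_neg_eq {f : ℕ → ℂ} {m : ℕ}
    (hmul : IsMultiplicativeFn f) (hm : 1 ≤ m) (hper : ∀ n : ℕ, 1 ≤ n → f (n + m) = f n)
    (hfm : f m ≠ 0) {s : ℝ} (hs : 1 < s) :
    ∑' n : ℕ, f n * ↑((n : ℝ) ^ (-s)) =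
      (∏ q ∈ m.primeFactors, ∑' k, f (q ^ k) * ↑(((q ^ k : ℕ) : ℝ) ^ (-s))) *
        ↑(∑' n, {n | n.Coprime m}.indicator (fun n : ℕ => (n : ℝ) ^ (-s)) n) := by
  obtain ⟨M, hM⟩ := exists_norm_le_of_periodic hm hper
  have hs0 : -s ≠ 0 := by linarith
  have hgmul (a b : ℕ) (hab : a.Coprime b) :
      f (a * b) * ↑(((a * b : ℕ) : ℝ) ^ (-s)) =
        f a * ↑((a : ℝ) ^ (-s)) * (f b * ↑((b : ℝ) ^ (-s))) := by
    rw [hmul.2 a b hab, Nat.cast_mul, Real.mul_rpow (Nat.cast_nonneg _) (Nat.cast_nonneg _),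
      Complex.ofReal_mul]
    ring
  have hcoprime : {n | ∀ q ∈ m.primeFactors, ¬ q ∣ n} = {n | n.Coprime m} :=
    Set.ext fun n => (Nat.coprime_iff_forall_mem_primeFactors_not_dvd (by omega)).symm
  rw [tsum_eq_prod_tsum_prime_pow_mul_tsum_indicator (summable_mul_rpow_neg_of_norm_le hM hs)
    (by simp [Real.zero_rpow hs0]) hgmul _ fun q hq => Nat.prime_of_mem_primeFactors hq,
    hcoprime, Complex.ofReal_tsum]
  refine congrArg _ (tsum_congr fun n => ?_)
  by_cases hn : n ∈ {n : ℕ | n.Coprime m}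
  · rw [Set.indicator_of_mem hn, Set.indicator_of_mem hn]
    rcases eq_or_ne n 0 with rfl | hn0
    · simp [Real.zero_rpow hs0]
    · rw [hmul.eq_one_of_coprime hm hper hfm hn0 hn, one_mul]
  · rw [Set.indicator_of_notMem hn, Set.indicator_of_notMem hn, Complex.ofReal_zero]

theorem stmt_1 (f : ℕ → ℂ) (m : ℕ) (hm : 1 ≤ m)
    (hmul : IsMultiplicativeFn f)
    (hper : ∀ n : ℕ, 1 ≤ n → f (n + m) = f n)
    (hfm : f m ≠ 0)
    (hbdd : HasBoundedPartialSums f) :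
    (∃ q : ℕ, q.Prime ∧ q ∣ m ∧ ∑' k : ℕ, f (q ^ k) / (q : ℂ) ^ k = 0) ∧
    (∀ p a : ℕ, p.Prime → p ^ a ∣ m → ¬ p ^ (a + 1) ∣ m →
      ∀ k : ℕ, a ≤ k → f (p ^ k) = f (p ^ a)) ∧
    (∀ p : ℕ, p.Prime → Nat.Coprime p m → ∀ k : ℕ, 1 ≤ k → f (p ^ k) = 1) := by
  refine ⟨?_, fun p a hp hpa hpa1 k hk => hmul.apply_prime_pow_eq_of_le hper hfm hp hpa hpa1 hk,
    fun p hp hpm k _ =>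
      hmul.eq_one_of_coprime hm hper hfm (pow_ne_zero k hp.ne_zero) (hpm.pow_left k)⟩
  by_contra! hE
  obtain ⟨C, hC⟩ := hbdd.exists_norm_tsum_mul_rpow_neg_le
  obtain ⟨M, hM⟩ := exists_norm_le_of_periodic hm hper
  have hprod := tendsto_finsetProd m.primeFactors fun q hq =>
    tendsto_tsum_mul_pow_rpow_neg (fun k => hM (q ^ k)) (Nat.prime_of_mem_primeFactors hq).one_lt
  have hprod_ne : ∏ q ∈ m.primeFactors, ∑' k, f (q ^ k) / (q : ℂ) ^ k ≠ 0 :=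
    prod_ne_zero_iff.2 fun q hq =>
      hE q (Nat.prime_of_mem_primeFactors hq) (Nat.dvd_of_mem_primeFactors hq)
  have hL : Tendsto (fun s : ℝ => ‖∑' n : ℕ, f n * ↑((n : ℝ) ^ (-s))‖) (𝓝[>] 1) atTop := by
    refine (hprod.norm.pos_mul_atTop (norm_pos_iff.2 hprod_ne)
      (tendsto_tsum_indicator_rpow_neg_atTop (not_summable_indicator_coprime_one_div
        (m := m) (by omega)))).congr' ?_
    filter_upwards [self_mem_nhdsWithin] with s (hs : 1 < s)
    rw [hmul.tsum_mul_rpow_neg_eq hm hper hfm hs, norm_mul, Complex.norm_real,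
      Real.norm_of_nonneg (tsum_nonneg fun n => Set.indicator_nonneg (fun n _ => by positivity) n)]
  obtain ⟨s, hs, hs1 : 1 < s⟩ := ((hL.eventually_gt_atTop C).and self_mem_nhdsWithin).exists
  exact hs.not_ge (hC s (by linarith) (summable_mul_rpow_neg_of_norm_le hM hs1))
end

section
/- Let f : ℕ → ℂ be multiplicative and let m ≥ 1 be an integer such that: (i) for some prime q dividing m, ∑_{k=0}^∞ f(q^k)/q^k = 0; (ii) for each prime power p^a exactly dividing m, f(p^k) = f(p^a) for all k ≥ a; (iii) for each prime p with gcd(p,m) = 1, f(p^k) = 1 for all k ≥ 1. Then f has period m and has bounded partial sums. -/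
/-!
The hypotheses on prime powers say that `f (p ^ k) = f (p ^ min (v_p m) k)` for every prime `p`,
so by multiplicativity `f n = f (gcd m n)` for `n ≥ 1`, which is `m`-periodic. Grouping the
`n < m` according to `d = gcd m n` turns the period sum into `∑_{d ∣ m} f d φ (m / d)`, the value
at `m` of the multiplicative function `f ⋆ φ`. Its factor at `q` vanishes: with `a = v_q m` and
`f (q ^ k) = f (q ^ a)` for `k ≥ a`, one finds
`(f ⋆ φ) (q ^ a) = q ^ a (1 - 1/q) ∑_k f (q ^ k) / q ^ k = 0`.
A periodic function with vanishing period sums has bounded partial sums.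
-/

open Finset ArithmeticFunction

def complexTotient : ArithmeticFunction ℂ := ⟨fun n => (n.totient : ℂ), by simp⟩

theorem complexTotient_apply (n : ℕ) : complexTotient n = n.totient := rfl

theorem isMultiplicative_complexTotient : complexTotient.IsMultiplicative :=
  ⟨by simp [complexTotient_apply], fun h => by simp [complexTotient_apply, Nat.totient_mul h]⟩

theorem Nat.sum_range_comp_gcd {M : Type*} [AddCommMonoid M] (F : ℕ → M) {m : ℕ} (hm : m ≠ 0) :
    ∑ n ∈ range m, F (m.gcd n) = ∑ d ∈ m.divisors, (m / d).totient • F d := by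
  rw [← sum_fiberwise_of_maps_to (g := m.gcd)
    fun n _ => Nat.mem_divisors.2 ⟨Nat.gcd_dvd_left m n, hm⟩]
  refine sum_congr rfl fun d hd => ?_
  rw [sum_congr rfl fun n hn => congrArg F (mem_filter.1 hn).2, sum_const,
    Nat.totient_div_of_dvd (Nat.dvd_of_mem_divisors hd)]

theorem ArithmeticFunction.IsMultiplicative.apply_eq_zero_of_apply_ordProj_eq_zero
    {R : Type*} [CommMonoidWithZero R] {g : ArithmeticFunction R} (hg : g.IsMultiplicative)
    {m q : ℕ} (hm : m ≠ 0) (hq : q.Prime) (hqm : q ∣ m) (h : g (q ^ m.factorization q) = 0) :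
    g m = 0 := by
  rw [hg.multiplicative_factorization g hm, Finsupp.prod]
  exact prod_eq_zero (by simp [hq, hqm, hm]) h

theorem Nat.cast_totient_prime_pow_succ {q : ℕ} (hq : q.Prime) (j : ℕ) :
    ((q ^ (j + 1)).totient : ℂ) = q ^ (j + 1) * (1 - (q : ℂ)⁻¹) := by
  have hq0 : (q : ℂ) ≠ 0 := Nat.cast_ne_zero.2 hq.ne_zero
  rw [Nat.totient_prime_pow_succ hq, Nat.cast_mul, Nat.cast_sub hq.one_le]
  field_simp
  push_cast
  ring

theorem hasSum_mul_geometric_of_eventually_const {c : ℕ → ℂ} {x : ℂ} (hx : ‖x‖ < 1) {a : ℕ}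
    (hc : ∀ k, a ≤ k → c k = c a) :
    HasSum (fun k => c k * x ^ k) (∑ i ∈ range a, c i * x ^ i + c a * x ^ a * (1 - x)⁻¹) := by
  refine (hasSum_nat_add_iff' a).1 ?_
  rw [add_sub_cancel_left]
  refine ((hasSum_geometric_of_norm_lt_one hx).mul_left (c a * x ^ a)).congr_fun fun k => ?_
  rw [hc (k + a) (by omega), pow_add]
  ring

theorem sum_range_mul_totient_prime_pow_eq_zero {q : ℕ} (hq : q.Prime) {c : ℕ → ℂ} {a : ℕ}
    (hc : ∀ k, a ≤ k → c k = c a) (hsum : ∑' k, c k / (q : ℂ) ^ k = 0) :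
    ∑ i ∈ range (a + 1), c i * (q ^ (a - i)).totient = 0 := by
  set x : ℂ := (q : ℂ)⁻¹
  have hq0 : (q : ℂ) ≠ 0 := Nat.cast_ne_zero.2 hq.ne_zero
  have hx : ‖x‖ < 1 := by
    simpa [x, norm_inv] using inv_lt_one_of_one_lt₀ (by exact_mod_cast hq.one_lt : (1 : ℝ) < q)
  have hx1 : 1 - x ≠ 0 := sub_ne_zero.2 fun h => by simp [← h] at hx
  have hS : ∑ i ∈ range a, c i * x ^ i + c a * x ^ a * (1 - x)⁻¹ = 0 := by
    rw [← (hasSum_mul_geometric_of_eventually_const hx hc).tsum_eq, ← hsum]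
    simp only [x, div_eq_mul_inv, inv_pow]
  have htotient : ∀ i ∈ range a,
      c i * ((q ^ (a - i)).totient : ℂ) = q ^ a * (1 - x) * (c i * x ^ i) := by
    intro i hi
    have hia : a - i = (a - i - 1) + 1 := by have := mem_range.1 hi; omega
    rw [hia, Nat.cast_totient_prime_pow_succ hq, ← hia, pow_sub₀ _ hq0 (mem_range.1 hi).le,
      inv_pow]
    ring
  have hqx : (q : ℂ) ^ a * x ^ a = 1 := by rw [← mul_pow, mul_inv_cancel₀ hq0, one_pow]
  rw [sum_range_succ, sum_congr rfl htotient, ← mul_sum, Nat.sub_self, pow_zero,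
    Nat.totient_one, Nat.cast_one, mul_one]
  calc (q : ℂ) ^ a * (1 - x) * ∑ i ∈ range a, c i * x ^ i + c a
      = q ^ a * (1 - x) * (∑ i ∈ range a, c i * x ^ i + c a * x ^ a * (1 - x)⁻¹) := by
        rw [mul_add]
        field_simp
        linear_combination (-c a) * hqx
    _ = 0 := by rw [hS, mul_zero]

theorem Function.Periodic.sum_range_shift {M : Type*} [AddCancelCommMonoid M] {G : ℕ → M}
    {m : ℕ} (hG : Function.Periodic G m) (c : ℕ) :
    ∑ k ∈ range m, G (c + k) = ∑ k ∈ range m, G k := by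
  induction c with
  | zero => simp
  | succ c ih =>
    have h := (sum_range_succ' (fun k => G (c + k)) m).symm.trans (sum_range_succ _ m)
    rw [add_zero, hG c, add_left_inj] at h
    rw [← ih, ← h]
    exact sum_congr rfl fun k _ => by rw [add_assoc, add_comm 1 k]

theorem Function.Periodic.norm_sum_range_le {G : ℕ → ℂ} {m : ℕ} (hG : Function.Periodic G m)
    (hm : m ≠ 0) (hzero : ∑ n ∈ range m, G n = 0) (N : ℕ) :
    ‖∑ n ∈ range N, G n‖ ≤ ∑ n ∈ range m, ‖G n‖ := by
  induction N using Nat.strong_induction_on with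
  | _ N ih =>
    rcases lt_or_ge N m with hN | hN
    · exact (norm_sum_le _ _).trans
        (sum_le_sum_of_subset_of_nonneg (range_subset_range.2 hN.le) fun _ _ _ => norm_nonneg _)
    · obtain ⟨N, rfl⟩ := Nat.exists_eq_add_of_le' hN
      rw [sum_range_add, hG.sum_range_shift, hzero, add_zero]
      exact ih N (by omega)

theorem Function.Periodic.hasBoundedPartialSums {G : ℕ → ℂ} {m : ℕ}
    (hG : Function.Periodic G m) (hm : m ≠ 0) (hzero : ∑ n ∈ range m, G n = 0) :
    HasBoundedPartialSums G := by
  refine ⟨∑ n ∈ range m, ‖G n‖ + ‖G 0‖ + 1, by positivity, fun N _ => ?_⟩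
  rw [← Ico_add_one_right_eq_Icc, sum_Ico_eq_sub _ (by omega), sum_range_one]
  linarith [norm_sub_le (∑ n ∈ range (N + 1), G n) (G 0), hG.norm_sum_range_le hm hzero (N + 1)]

theorem HasBoundedPartialSums.congr {f G : ℕ → ℂ} (hG : HasBoundedPartialSums G)
    (h : ∀ n, n ≠ 0 → f n = G n) : HasBoundedPartialSums f := by
  obtain ⟨C, hC, hbound⟩ := hG
  refine ⟨C, hC, fun N hN => ?_⟩
  rw [sum_congr rfl fun n hn => h n (by have := (mem_Icc.1 hn).1; omega)]
  exact hbound N hN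

namespace IsMultiplicativeFn

variable {f : ℕ → ℂ}

theorem apply_eq_apply_gcd (hf : IsMultiplicativeFn f) {m n : ℕ} (hm : m ≠ 0) (hn : n ≠ 0)
    (hloc : ∀ p k, p.Prime → f (p ^ k) = f (p ^ min (m.factorization p) k)) :
    f n = f (m.gcd n) := by
  have hpow_zero : ∀ p ∈ n.primeFactors, f (p ^ 0) = 1 := fun _ _ => by rw [pow_zero, hf.1]
  rw [Nat.multiplicative_factorization f hf.2 hf.1 hn,
    Nat.multiplicative_factorization f hf.2 hf.1 (Nat.gcd_ne_zero_left hm),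
    Nat.factorization_gcd hm hn, Finsupp.prod, Finsupp.prod_of_support_subset _ _ _ hpow_zero]
  · refine prod_congr rfl fun p hp => ?_
    rw [Finsupp.inf_apply]
    exact hloc p _ (Nat.prime_of_mem_primeFactors hp)
  · rw [Finsupp.support_inf]
    exact inter_subset_right

def toArithmeticFunction (f : ℕ → ℂ) : ArithmeticFunction ℂ :=
  ⟨fun n => if n = 0 then 0 else f n, if_pos rfl⟩

theorem toArithmeticFunction_apply {n : ℕ} (hn : n ≠ 0) : toArithmeticFunction f n = f n :=
  if_neg hn

theorem isMultiplicative_toArithmeticFunction (hf : IsMultiplicativeFn f) :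
    (toArithmeticFunction f).IsMultiplicative := by
  refine IsMultiplicative.iff_ne_zero.2 ⟨by simp [toArithmeticFunction_apply, hf.1], ?_⟩
  intro m n hm hn hmn
  simp only [toArithmeticFunction_apply (mul_ne_zero hm hn), toArithmeticFunction_apply hm,
    toArithmeticFunction_apply hn, hf.2 m n hmn]

theorem toArithmeticFunction_mul_complexTotient_apply (n : ℕ) :
    (toArithmeticFunction f * complexTotient) n = ∑ d ∈ n.divisors, f d * (n / d).totient := by
  rw [mul_apply,
    Nat.sum_divisorsAntidiagonal (fun d e => toArithmeticFunction f d * complexTotient e)]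
  exact sum_congr rfl fun d hd => by
    rw [toArithmeticFunction_apply (Nat.pos_of_mem_divisors hd).ne', complexTotient_apply]

theorem sum_range_apply_gcd_eq_zero (hf : IsMultiplicativeFn f) {m q : ℕ} (hm : m ≠ 0)
    (hq : q.Prime) (hqm : q ∣ m)
    (hstab : ∀ k, m.factorization q ≤ k → f (q ^ k) = f (q ^ m.factorization q))
    (hsum : ∑' k, f (q ^ k) / (q : ℂ) ^ k = 0) :
    ∑ n ∈ range m, f (m.gcd n) = 0 := by
  have hlocal : (toArithmeticFunction f * complexTotient) (q ^ m.factorization q) = 0 := by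
    rw [toArithmeticFunction_mul_complexTotient_apply, Nat.sum_divisors_prime_pow hq,
      ← sum_range_mul_totient_prime_pow_eq_zero hq hstab hsum]
    exact sum_congr rfl fun i hi => by
      rw [Nat.pow_div (Nat.le_of_lt_succ (mem_range.1 hi)) hq.pos]
  have hzero := (hf.isMultiplicative_toArithmeticFunction.mul isMultiplicative_complexTotient
    ).apply_eq_zero_of_apply_ordProj_eq_zero hm hq hqm hlocal
  rw [toArithmeticFunction_mul_complexTotient_apply] at hzero
  rw [Nat.sum_range_comp_gcd _ hm, ← hzero]
  exact sum_congr rfl fun d _ => by rw [nsmul_eq_mul, mul_comm]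

end IsMultiplicativeFn

theorem stmt_2_general (f : ℕ → ℂ) (m : ℕ) (hm : 1 ≤ m)
    (hmul : IsMultiplicativeFn f)
    (hi : ∃ q : ℕ, q.Prime ∧ q ∣ m ∧ ∑' k : ℕ, f (q ^ k) / (q : ℂ) ^ k = 0)
    (hii : ∀ p a : ℕ, p.Prime → p ^ a ∣ m → ¬ p ^ (a + 1) ∣ m →
      ∀ k : ℕ, a ≤ k → f (p ^ k) = f (p ^ a)) :
    (∀ n : ℕ, 1 ≤ n → f (n + m) = f n) ∧ HasBoundedPartialSums f := by
  have hm0 : m ≠ 0 := by omega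
  have hstab : ∀ p k, p.Prime → m.factorization p ≤ k →
      f (p ^ k) = f (p ^ m.factorization p) :=
    fun p k hp => hii p _ hp (Nat.ordProj_dvd m p) (Nat.pow_succ_factorization_not_dvd hm0 hp) k
  have hgcd : ∀ n, n ≠ 0 → f n = f (m.gcd n) := fun n hn =>
    hmul.apply_eq_apply_gcd hm0 hn fun p k hp => by
      rcases le_total (m.factorization p) k with h | h
      · rw [min_eq_left h, hstab p k hp h]
      · rw [min_eq_right h]
  refine ⟨fun n hn => by rw [hgcd _ (by omega), hgcd n (by omega), Nat.gcd_add_self_right], ?_⟩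
  obtain ⟨q, hq, hqm, hsum⟩ := hi
  have hperiodic : Function.Periodic (fun n => f (m.gcd n)) m := fun n =>
    congrArg f (Nat.gcd_add_self_right m n)
  exact (hperiodic.hasBoundedPartialSums hm0
    (hmul.sum_range_apply_gcd_eq_zero hm0 hq hqm (fun k => hstab q k hq) hsum)).congr hgcd

theorem stmt_2 (f : ℕ → ℂ) (m : ℕ) (hm : 1 ≤ m)
    (hmul : IsMultiplicativeFn f)
    (hi : ∃ q : ℕ, q.Prime ∧ q ∣ m ∧ ∑' k : ℕ, f (q ^ k) / (q : ℂ) ^ k = 0)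
    (hii : ∀ p a : ℕ, p.Prime → p ^ a ∣ m → ¬ p ^ (a + 1) ∣ m →
      ∀ k : ℕ, a ≤ k → f (p ^ k) = f (p ^ a))
    (hiii : ∀ p : ℕ, p.Prime → Nat.Coprime p m → ∀ k : ℕ, 1 ≤ k → f (p ^ k) = 1) :
    (∀ n : ℕ, 1 ≤ n → f (n + m) = f n) ∧ HasBoundedPartialSums f :=
  stmt_2_general f m hm hmul hi hii
end

section
/- If f : ℕ → ℂ is multiplicative and has bounded partial sums, then for each ε > 0 there exists M > 0 such that for every prime p ≥ M and every integer k ≥ 1, |f(p^k)| ≤ 1 + ε. -/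
open Finset

theorem IsMultiplicativeFn.map_prod {f : ℕ → ℂ} (hf : IsMultiplicativeFn f) {ι : Type*}
    (g : ι → ℕ) (s : Finset ι) (hs : (s : Set ι).Pairwise (Function.onFun Nat.Coprime g)) :
    f (∏ i ∈ s, g i) = ∏ i ∈ s, f (g i) := by
  classical
  induction s using Finset.induction_on with
  | empty => simp [hf.1]
  | insert a s has ih =>
    rw [coe_insert, Set.pairwise_insert_of_symm] at hs
    rw [prod_insert has, prod_insert has, hf.2, ih hs.1]
    exact Nat.Coprime.prod_right fun i hi => hs.2 _ hi (ne_of_mem_of_not_mem hi has).symm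

theorem IsMultiplicativeFn.map_prod_prime_pow {f : ℕ → ℂ} (hf : IsMultiplicativeFn f)
    (s : Finset ℕ) (hs : ∀ p ∈ s, p.Prime) (k : ℕ → ℕ) :
    f (∏ p ∈ s, p ^ k p) = ∏ p ∈ s, f (p ^ k p) :=
  hf.map_prod _ s fun p hp q hq hpq => Nat.coprime_pow_primes _ _ (hs p hp) (hs q hq) hpq

theorem HasBoundedPartialSums.exists_norm_le {f : ℕ → ℂ} (hf : HasBoundedPartialSums f) :
    ∃ B : ℝ, ∀ n : ℕ, 0 < n → ‖f n‖ ≤ B := by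
  obtain ⟨C, hC, hS⟩ := hf
  have hS' : ∀ N : ℕ, ‖∑ n ∈ Icc 1 N, f n‖ ≤ C := by
    intro N
    rcases N.eq_zero_or_pos with rfl | hN
    · simpa using hC.le
    · exact hS N hN
  refine ⟨C + C, fun n hn => ?_⟩
  obtain ⟨m, rfl⟩ := Nat.exists_eq_succ_of_ne_zero hn.ne'
  have hdiff : f (m + 1) = ∑ n ∈ Icc 1 (m + 1), f n - ∑ n ∈ Icc 1 m, f n := by
    rw [sum_Icc_succ_top (by omega), add_sub_cancel_left]
  rw [hdiff]
  exact (norm_sub_le _ _).trans (add_le_add (hS' _) (hS' _))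

def exceptionalPrimes (f : ℕ → ℂ) (c : ℝ) : Set ℕ :=
  {p | p.Prime ∧ ∃ k, c < ‖f (p ^ k)‖}

theorem IsMultiplicativeFn.exceptionalPrimes_finite {f : ℕ → ℂ} (hf : IsMultiplicativeFn f)
    {B : ℝ} (hB : ∀ n : ℕ, 0 < n → ‖f n‖ ≤ B) {c : ℝ} (hc : 1 < c) :
    (exceptionalPrimes f c).Finite := by
  by_contra hinf
  obtain ⟨N, hN⟩ := pow_unbounded_of_one_lt B hc
  obtain ⟨t, hts, htN⟩ := Set.Infinite.exists_subset_card_eq hinf N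
  have hprime : ∀ p ∈ t, p.Prime := fun p hp => (hts hp).1
  have hexc : ∀ p ∈ t, ∃ k, c < ‖f (p ^ k)‖ := fun p hp => (hts hp).2
  choose! k hk using hexc
  have hpos : 0 < ∏ p ∈ t, p ^ k p :=
    prod_pos fun p hp => pow_pos (hprime p hp).pos _
  have hlarge : c ^ N ≤ ‖f (∏ p ∈ t, p ^ k p)‖ := by
    rw [hf.map_prod_prime_pow t hprime, norm_prod, ← htN, ← prod_const]
    exact prod_le_prod (fun _ _ => by linarith) fun p hp => (hk p hp).le
  linarith [hB _ hpos]

theorem stmt_7 (f : ℕ → ℂ)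
    (hmul : IsMultiplicativeFn f)
    (hbdd : HasBoundedPartialSums f) :
    ∀ ε : ℝ, 0 < ε → ∃ M : ℝ, 0 < M ∧
      ∀ p : ℕ, p.Prime → M ≤ (p : ℝ) → ∀ k : ℕ, 1 ≤ k → ‖f (p ^ k)‖ ≤ 1 + ε := by
  intro ε hε
  obtain ⟨B, hB⟩ := hbdd.exists_norm_le
  obtain ⟨b, hb⟩ := (hmul.exceptionalPrimes_finite hB (by linarith : 1 < 1 + ε)).bddAbove
  refine ⟨b + 1, by positivity, fun p hp hpM k _ => ?_⟩
  by_contra! hlarge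
  have : (p : ℝ) ≤ b := by exact_mod_cast hb ⟨hp, k, hlarge⟩
  linarith
end

section
/- Let f₁ and f₂ be multiplicative functions ℕ → ℂ such that, for j = 1,2, f_j satisfies with respect to an integer m_j ≥ 1 the conditions: (i) for some prime q dividing m_j, ∑_{k=0}^∞ f_j(q^k)/q^k = 0; (ii) for each prime power p^a exactly dividing m_j, f_j(p^k) = f_j(p^a) for all k ≥ a; (iii) for each prime p with gcd(p,m_j) = 1, f_j(p^k) = 1 for all k ≥ 1. Let g = f₁ ∗ f₂ ∗ μ ∗ μ, where μ is the Möbius function. Then for every ε > 0, ∑_{n≤x} |g(n)| = O_ε(x^ε) as x → ∞. -/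
open Filter Asymptotics

/-- Conditions i-iii of Theorem 2 with respect to the integer `m`. -/
def SatisfiesConds (f : ℕ → ℂ) (m : ℕ) : Prop :=
  (∃ q : ℕ, q.Prime ∧ q ∣ m ∧ ∑' k : ℕ, f (q ^ k) / (q : ℂ) ^ k = 0) ∧
  (∀ p a : ℕ, p.Prime → p ^ a ∣ m → ¬ p ^ (a + 1) ∣ m →
    ∀ k : ℕ, a ≤ k → f (p ^ k) = f (p ^ a)) ∧
  (∀ p : ℕ, p.Prime → Nat.Coprime p m → ∀ k : ℕ, 1 ≤ k → f (p ^ k) = 1)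

/-- Dirichlet convolution. -/
noncomputable def dconv (f g : ℕ → ℂ) : ℕ → ℂ :=
  fun n => ∑ d ∈ n.divisors, f d * g (n / d)

/-- The Möbius function, complex valued. -/
def moebiusC : ℕ → ℂ := fun n => ((ArithmeticFunction.moebius n : ℤ) : ℂ)

/-!
`g = (f₁ ∗ μ) ∗ (f₂ ∗ μ)` has finite support. Since `f(p^k)` is constant for `k ≥ v_p(m)`,
`(f ∗ μ)(p^(k+1)) = f(p^(k+1)) - f(p^k)` vanishes for `k ≥ v_p(m)`, so the multiplicative function
`f ∗ μ` is supported on the divisors of `m`. Hence `g` is supported on the divisors of `m₁ m₂`,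
and its partial sums are bounded.
-/

open Finset
open scoped ArithmeticFunction.Moebius ArithmeticFunction.zeta

namespace ArithmeticFunction

variable {R : Type*}

def ofFun [Zero R] (f : ℕ → R) : ArithmeticFunction R :=
  ⟨fun n => if n = 0 then 0 else f n, if_pos rfl⟩

theorem ofFun_apply [Zero R] (f : ℕ → R) {n : ℕ} (hn : n ≠ 0) : ofFun f n = f n :=
  if_neg hn

theorem ofFun_dconv (f g : ℕ → ℂ) : ofFun (dconv f g) = ofFun f * ofFun g := by
  ext n
  rcases eq_or_ne n 0 with rfl | hn
  · simp
  rw [ofFun_apply _ hn, mul_apply, Nat.sum_divisorsAntidiagonal (fun d e => ofFun f d * ofFun g e)]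
  refine sum_congr rfl fun d hd => ?_
  obtain ⟨hdn, -⟩ := Nat.mem_divisors.mp hd
  rw [ofFun_apply f (ne_zero_of_dvd_ne_zero hn hdn),
    ofFun_apply g (Nat.div_ne_zero_iff_of_dvd hdn |>.2 ⟨hn, ne_zero_of_dvd_ne_zero hn hdn⟩)]

theorem ofFun_moebiusC : ofFun moebiusC = (μ : ArithmeticFunction ℂ) := by
  ext n
  rcases eq_or_ne n 0 with rfl | hn
  · simp
  rw [ofFun_apply _ hn, intCoe_apply, moebiusC]

theorem isMultiplicative_ofFun {f : ℕ → ℂ} (hf : IsMultiplicativeFn f) :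
    (ofFun f).IsMultiplicative := by
  refine IsMultiplicative.iff_ne_zero.2 ⟨?_, fun {m n} hm hn hmn => ?_⟩
  · rw [ofFun_apply f one_ne_zero, hf.1]
  · rw [ofFun_apply f (mul_ne_zero hm hn), ofFun_apply f hm, ofFun_apply f hn, hf.2 m n hmn]

theorem mul_moebius_apply_prime_pow_succ [CommRing R] (F : ArithmeticFunction R) {p : ℕ}
    (hp : p.Prime) (k : ℕ) : (F * μ) (p ^ (k + 1)) = F (p ^ (k + 1)) - F (p ^ k) := by
  have hsum (n : ℕ) : F (p ^ n) = ∑ i ∈ range (n + 1), (F * μ) (p ^ i) := by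
    rw [← Nat.sum_divisors_prime_pow hp, ← coe_mul_zeta_apply, mul_assoc,
      coe_moebius_mul_coe_zeta, mul_one]
  rw [hsum (k + 1), hsum k, sum_range_succ, add_sub_cancel_left]

theorem support_subset_divisors_of_apply_prime_pow_eq_zero [CommMonoidWithZero R]
    {F : ArithmeticFunction R} (hF : F.IsMultiplicative) {M : ℕ} (hM : M ≠ 0)
    (h : ∀ p k, p.Prime → M.factorization p < k → F (p ^ k) = 0) :
    Function.support F ⊆ M.divisors := by
  intro n hFn
  have hn : n ≠ 0 := by
    rintro rfl
    exact hFn F.map_zero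
  refine Nat.mem_divisors.2 ⟨(Nat.factorization_le_iff_dvd hn hM).1 fun p => ?_, hM⟩
  by_contra! hlt
  have hp : p ∈ n.factorization.support := Finsupp.mem_support_iff.2 (by omega)
  exact hFn <| (hF.multiplicative_factorization F hn).trans <|
    prod_eq_zero hp (h p _ (Nat.prime_of_mem_primeFactors (Nat.support_factorization n ▸ hp)) hlt)

theorem support_mul_subset_divisors_mul [Semiring R] {F G : ArithmeticFunction R} {a b : ℕ}
    (hF : Function.support F ⊆ a.divisors) (hG : Function.support G ⊆ b.divisors) :
    Function.support (F * G) ⊆ (a * b).divisors := by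
  intro n hn
  rw [Function.mem_support, mul_apply] at hn
  obtain ⟨⟨d, e⟩, hde, hne⟩ := exists_ne_zero_of_sum_ne_zero hn
  obtain ⟨hda, ha⟩ := Nat.mem_divisors.1 (hF (left_ne_zero_of_mul hne))
  obtain ⟨heb, hb⟩ := Nat.mem_divisors.1 (hG (right_ne_zero_of_mul hne))
  rw [← (Nat.mem_divisorsAntidiagonal.1 hde).1]
  exact Nat.mem_divisors.2 ⟨mul_dvd_mul hda heb, mul_ne_zero ha hb⟩

theorem support_ofFun_mul_moebius_subset_divisors {f : ℕ → ℂ} {m : ℕ} (hm : m ≠ 0)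
    (hf : IsMultiplicativeFn f) (hc : SatisfiesConds f m) :
    Function.support (ofFun f * (μ : ArithmeticFunction ℂ)) ⊆ m.divisors := by
  refine support_subset_divisors_of_apply_prime_pow_eq_zero
    ((isMultiplicative_ofFun hf).mul isMultiplicative_moebius.intCast) hm fun p k hp hk => ?_
  obtain ⟨j, rfl⟩ : ∃ j, k = j + 1 := ⟨k - 1, by omega⟩
  -- condition (ii) at `a = v_p(m)`, which may be `0`
  have hconst := hc.2.1 p _ hp (Nat.ordProj_dvd m p) (Nat.pow_succ_factorization_not_dvd hm hp)
  rw [mul_moebius_apply_prime_pow_succ _ hp, ofFun_apply f (pow_ne_zero _ hp.ne_zero),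
    ofFun_apply f (pow_ne_zero _ hp.ne_zero), hconst (j + 1) (by omega), hconst j (by omega),
    sub_self]

theorem isBigO_sum_norm_one_of_support_subset {E : Type*} [SeminormedAddCommGroup E]
    {g : ArithmeticFunction E} {s : Finset ℕ} (hg : Function.support g ⊆ s) :
    (fun x : ℝ => ∑ n ∈ Icc 1 ⌊x⌋₊, ‖g n‖) =O[atTop] fun _ => (1 : ℝ) := by
  refine isBigO_of_le' _ (c := ∑ n ∈ s, ‖g n‖) fun x => ?_
  rw [norm_one, mul_one, Real.norm_of_nonneg (sum_nonneg fun _ _ => norm_nonneg _),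
    ← sum_filter_of_ne (p := (· ∈ s)) fun n _ hn => hg (ne_zero_of_norm_ne_zero hn)]
  exact sum_le_sum_of_subset_of_nonneg (fun n hn => (mem_filter.1 hn).2)
    fun _ _ _ => norm_nonneg _

end ArithmeticFunction

open ArithmeticFunction

theorem stmt_8 (f₁ f₂ : ℕ → ℂ) (m₁ m₂ : ℕ) (hm₁ : 1 ≤ m₁) (hm₂ : 1 ≤ m₂)
    (hmul₁ : IsMultiplicativeFn f₁) (hmul₂ : IsMultiplicativeFn f₂)
    (h₁ : SatisfiesConds f₁ m₁) (h₂ : SatisfiesConds f₂ m₂) :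
    ∀ ε : ℝ, 0 < ε →
      (fun x : ℝ =>
          ∑ n ∈ Finset.Icc 1 ⌊x⌋₊, ‖dconv (dconv (dconv f₁ f₂) moebiusC) moebiusC n‖)
        =O[atTop] fun x : ℝ => x ^ ε := by
  intro ε hε
  have hG : ofFun (dconv (dconv (dconv f₁ f₂) moebiusC) moebiusC) =
      (ofFun f₁ * μ) * (ofFun f₂ * μ) := by
    simp only [ofFun_dconv, ofFun_moebiusC]
    ring
  have hsupp := support_mul_subset_divisors_mul
    (support_ofFun_mul_moebius_subset_divisors (by omega) hmul₁ h₁)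
    (support_ofFun_mul_moebius_subset_divisors (by omega) hmul₂ h₂)
  rw [← hG] at hsupp
  have hsum (x : ℝ) : ∑ n ∈ Icc 1 ⌊x⌋₊, ‖dconv (dconv (dconv f₁ f₂) moebiusC) moebiusC n‖ =
      ∑ n ∈ Icc 1 ⌊x⌋₊, ‖ofFun (dconv (dconv (dconv f₁ f₂) moebiusC) moebiusC) n‖ :=
    sum_congr rfl fun n hn => by rw [ofFun_apply _ (by simp at hn; omega)]
  simp only [hsum]
  exact (isBigO_sum_norm_one_of_support_subset hsupp).trans
    ((isLittleO_const_left_of_ne one_ne_zero).2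
      (tendsto_norm_atTop_atTop.comp (tendsto_rpow_atTop hε))).isBigO
end

section
/- Let q be a prime, and let f : ℕ → ℂ be the multiplicative function defined by f(q^k) = −(q−1) for all k ≥ 1 and f(p^k) = 1 for all primes p ≠ q and all k ≥ 1. Then for all real x > q², ∑_{n≤x} (f ∗ f)(n) = Δ(x) − 2q·Δ(x/q) + q²·Δ(x/q²). -/
/-- The error term in the Dirichlet divisor problem. -/
noncomputable def Δ (x : ℝ) : ℝ :=
  (∑ n ∈ Finset.Icc 1 ⌊x⌋₊, (n.divisors.card : ℝ)) - x * Real.log x -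
    (2 * Real.eulerMascheroniConstant - 1) * x

/-! On positive integers `f n = 1 - q [q ∣ n]`, so summing `(f ∗ f)(n) = ∑_{ab = n} f a f b` over
`n ≤ x` counts lattice points `a b ≤ x`, weighted by divisibility by `q`. Substituting `a = q a'`
and/or `b = q b'` turns each weighted count into the plain count `D(y) = ∑_{n ≤ y} τ(n)` at
`y = x, x/q, x/q²`, giving `D(x) - 2q D(x/q) + q² D(x/q²)`. The main term `y log y + (2γ - 1) y`
of `D` is annihilated by this combination. -/

open Finset

def hyperbolaPairs (N : ℕ) : Finset (ℕ × ℕ) :=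
  (Icc 1 N).biUnion Nat.divisorsAntidiagonal

lemma mem_hyperbolaPairs {N : ℕ} {p : ℕ × ℕ} :
    p ∈ hyperbolaPairs N ↔ p.1 ≠ 0 ∧ p.2 ≠ 0 ∧ p.1 * p.2 ≤ N := by
  simp only [hyperbolaPairs, mem_biUnion, mem_Icc, Nat.mem_divisorsAntidiagonal]
  constructor
  · rintro ⟨n, ⟨-, hn⟩, rfl, hn0⟩
    exact ⟨left_ne_zero_of_mul hn0, right_ne_zero_of_mul hn0, hn⟩
  · rintro ⟨h1, h2, hN⟩
    exact ⟨_, ⟨Nat.one_le_iff_ne_zero.2 (mul_ne_zero h1 h2), hN⟩, rfl, mul_ne_zero h1 h2⟩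

lemma pairwiseDisjoint_divisorsAntidiagonal (s : Set ℕ) :
    s.PairwiseDisjoint Nat.divisorsAntidiagonal := by
  intro a _ b _ hab
  refine disjoint_left.2 fun p hpa hpb => hab ?_
  exact (Nat.mem_divisorsAntidiagonal.1 hpa).1.symm.trans (Nat.mem_divisorsAntidiagonal.1 hpb).1

lemma sum_Icc_dconv (f g : ℕ → ℂ) (N : ℕ) :
    ∑ n ∈ Icc 1 N, dconv f g n = ∑ p ∈ hyperbolaPairs N, f p.1 * g p.2 := by
  rw [hyperbolaPairs, sum_biUnion (pairwiseDisjoint_divisorsAntidiagonal _)]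
  exact sum_congr rfl fun n _ => (Nat.sum_divisorsAntidiagonal (fun a b => f a * g b)).symm

lemma card_hyperbolaPairs (N : ℕ) :
    #(hyperbolaPairs N) = ∑ n ∈ Icc 1 N, #n.divisors := by
  rw [hyperbolaPairs, card_biUnion (pairwiseDisjoint_divisorsAntidiagonal _)]
  exact sum_congr rfl fun n _ => by rw [← Nat.map_div_right_divisors, card_map]

lemma card_filter_dvd_hyperbolaPairs {c d : ℕ} (hc : 0 < c) (hd : 0 < d) (N : ℕ) :
    #{p ∈ hyperbolaPairs N | c ∣ p.1 ∧ d ∣ p.2} = #(hyperbolaPairs (N / (c * d))) := by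
  refine (card_nbij' (fun p => (c * p.1, d * p.2)) (fun p => (p.1 / c, p.2 / d))
    ?_ ?_ ?_ ?_).symm
  · rintro ⟨a, b⟩ hp
    simp only [mem_coe, mem_filter, mem_hyperbolaPairs] at hp ⊢
    obtain ⟨ha, hb, hN⟩ := hp
    rw [Nat.le_div_iff_mul_le (by positivity)] at hN
    exact ⟨⟨by positivity, by positivity, by linarith⟩, dvd_mul_right _ _, dvd_mul_right _ _⟩
  · rintro ⟨_, _⟩ hp
    simp only [mem_coe, mem_filter, mem_hyperbolaPairs] at hp ⊢
    obtain ⟨⟨ha, hb, hN⟩, ⟨a, rfl⟩, ⟨b, rfl⟩⟩ := hp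
    rw [Nat.mul_div_cancel_left _ hc, Nat.mul_div_cancel_left _ hd,
      Nat.le_div_iff_mul_le (by positivity)]
    exact ⟨right_ne_zero_of_mul ha, right_ne_zero_of_mul hb, by linarith⟩
  · intro p _
    simp [Nat.mul_div_cancel_left _ hc, Nat.mul_div_cancel_left _ hd]
  · intro p hp
    simp only [mem_coe, mem_filter] at hp
    simp [Nat.mul_div_cancel' hp.2.1, Nat.mul_div_cancel' hp.2.2]

lemma sum_hyperbolaPairs_ite_dvd_mul_ite_dvd {c d : ℕ} (hc : 0 < c) (hd : 0 < d) (N : ℕ) :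
    ∑ p ∈ hyperbolaPairs N, ((if c ∣ p.1 then 1 else 0) * (if d ∣ p.2 then 1 else 0) : ℂ) =
      #(hyperbolaPairs (N / (c * d))) := by
  simp_rw [ite_zero_mul_ite_zero, one_mul, sum_boole, card_filter_dvd_hyperbolaPairs hc hd]

lemma sum_hyperbolaPairs_mul_self_of_eq_one_sub {q : ℕ} (hq : 0 < q) {f : ℕ → ℂ}
    (hf : ∀ n, n ≠ 0 → f n = 1 - q * if q ∣ n then 1 else 0) (N : ℕ) :
    ∑ p ∈ hyperbolaPairs N, f p.1 * f p.2 =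
      #(hyperbolaPairs N) - 2 * q * #(hyperbolaPairs (N / q)) +
        (q : ℂ) ^ 2 * #(hyperbolaPairs (N / q ^ 2)) := by
  have hsplit : ∀ p ∈ hyperbolaPairs N, f p.1 * f p.2 =
      ((if 1 ∣ p.1 then 1 else 0) * (if 1 ∣ p.2 then 1 else 0) : ℂ)
        - q * ((if q ∣ p.1 then 1 else 0) * (if 1 ∣ p.2 then 1 else 0))
        - q * ((if 1 ∣ p.1 then 1 else 0) * (if q ∣ p.2 then 1 else 0))
        + q ^ 2 * ((if q ∣ p.1 then 1 else 0) * (if q ∣ p.2 then 1 else 0)) := by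
    intro p hp
    obtain ⟨ha, hb, -⟩ := mem_hyperbolaPairs.1 hp
    simp only [hf _ ha, hf _ hb, one_dvd, if_true]
    ring
  rw [sum_congr rfl hsplit]
  simp only [sum_add_distrib, sum_sub_distrib, ← mul_sum,
    sum_hyperbolaPairs_ite_dvd_mul_ite_dvd, hq, zero_lt_one]
  simp only [mul_one, one_mul, Nat.div_one, sq]
  ring

lemma IsMultiplicativeFn.apply_eq_one_sub_ite_dvd {q : ℕ} (hq : q.Prime) {f : ℕ → ℂ}
    (hmul : IsMultiplicativeFn f) (hfq : ∀ k : ℕ, 1 ≤ k → f (q ^ k) = -((q : ℂ) - 1))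
    (hfp : ∀ p : ℕ, p.Prime → p ≠ q → ∀ k : ℕ, 1 ≤ k → f (p ^ k) = 1) :
    ∀ n : ℕ, n ≠ 0 → f n = 1 - q * if q ∣ n then 1 else 0 := by
  intro n
  induction n using Nat.recOnPrimePow with
  | zero => exact fun h => (h rfl).elim
  | one => intro _; simp [hmul.1, hq.one_lt.ne']
  | prime_pow_mul a p k hp hpa hk ih =>
    intro hn
    rw [hmul.2 _ _ (Nat.Coprime.pow_left k ((hp.coprime_iff_not_dvd).2 hpa)),
      ih (right_ne_zero_of_mul hn)]
    by_cases hpq : p = q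
    · subst hpq
      rw [hfq k hk, if_neg hpa, if_pos (dvd_mul_of_dvd_left (dvd_pow_self p hk.ne') a)]
      ring
    · have hcop : q.Coprime (p ^ k) := ((Nat.coprime_primes hq hp).2 (Ne.symm hpq)).pow_right k
      simp only [hfp p hp hpq k hk, one_mul, hcop.dvd_mul_left]

lemma Δ_eq_card_hyperbolaPairs (x : ℝ) :
    Δ x = #(hyperbolaPairs ⌊x⌋₊) - x * Real.log x -
      (2 * Real.eulerMascheroniConstant - 1) * x := by
  rw [Δ, card_hyperbolaPairs]
  push_cast
  rfl

lemma mul_log_add_mul_dilation_combination (A : ℝ) {c : ℝ} (hc : c ≠ 0) (x : ℝ) :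
    (x * Real.log x + A * x) - 2 * c * (x / c * Real.log (x / c) + A * (x / c)) +
      c ^ 2 * (x / c ^ 2 * Real.log (x / c ^ 2) + A * (x / c ^ 2)) = 0 := by
  rcases eq_or_ne x 0 with rfl | hx
  · simp
  rw [Real.log_div hx hc, Real.log_div hx (pow_ne_zero 2 hc), Real.log_pow]
  field_simp
  ring

lemma Δ_sub_two_mul_add_sq_mul (q : ℕ) (hq : 0 < q) (x : ℝ) :
    Δ x - 2 * q * Δ (x / q) + (q : ℝ) ^ 2 * Δ (x / (q : ℝ) ^ 2) =
      #(hyperbolaPairs ⌊x⌋₊) - 2 * q * #(hyperbolaPairs (⌊x⌋₊ / q)) +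
        (q : ℝ) ^ 2 * #(hyperbolaPairs (⌊x⌋₊ / q ^ 2)) := by
  have hfloor : ⌊x / (q : ℝ) ^ 2⌋₊ = ⌊x⌋₊ / q ^ 2 := by
    rw [← Nat.floor_div_natCast, Nat.cast_pow]
  have hmain := mul_log_add_mul_dilation_combination (2 * Real.eulerMascheroniConstant - 1)
    (Nat.cast_ne_zero.2 hq.ne') x
  simp only [Δ_eq_card_hyperbolaPairs, Nat.floor_div_natCast, hfloor]
  linear_combination -hmain

theorem stmt_12 (q : ℕ) (hq : q.Prime) (f : ℕ → ℂ)
    (hmul : IsMultiplicativeFn f)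
    (hfq : ∀ k : ℕ, 1 ≤ k → f (q ^ k) = -((q : ℂ) - 1))
    (hfp : ∀ p : ℕ, p.Prime → p ≠ q → ∀ k : ℕ, 1 ≤ k → f (p ^ k) = 1) :
    ∀ x : ℝ, ((q : ℝ) ^ 2 < x) →
      ∑ n ∈ Finset.Icc 1 ⌊x⌋₊, dconv f f n =
        (Δ x : ℂ) - 2 * (q : ℂ) * (Δ (x / q) : ℂ) +
          (q : ℂ) ^ 2 * (Δ (x / (q : ℝ) ^ 2) : ℂ) := by
  intro x _
  have hΔ := congrArg (fun r : ℝ => (r : ℂ)) (Δ_sub_two_mul_add_sq_mul q hq.pos x)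
  push_cast at hΔ
  rw [sum_Icc_dconv, sum_hyperbolaPairs_mul_self_of_eq_one_sub hq.pos
    (hmul.apply_eq_one_sub_ite_dvd hq hfq hfp), hΔ]
end

section
/- Let f : ℕ → ℂ be multiplicative and let m ≥ 1 be an integer such that: for each prime power p^a exactly dividing m, f(p^k) = f(p^a) for all k ≥ a; and for each prime p with gcd(p,m) = 1, f(p^k) = 1 for all k ≥ 1. Then f(n) = f(gcd(n,m)) for every n ≥ 1; in particular, f has period m. -/
/-!
Both `f` and `n ↦ f (gcd n m)` are multiplicative, so it suffices to compare them on prime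
powers `p ^ k`. There `gcd (p ^ k) m = p ^ min k a` with `p ^ a ∥ m`, and the hypothesis
`f (p ^ k) = f (p ^ a)` for `k ≥ a` is exactly what is needed.
Periodicity follows from `gcd (n + m) m = gcd n m`.
-/

theorem Nat.gcd_prime_pow_eq_pow_min {p m : ℕ} (hp : p.Prime) (hm : m ≠ 0) (k : ℕ) :
    Nat.gcd (p ^ k) m = p ^ min k (m.factorization p) := by
  obtain ⟨j, -, hj⟩ := (Nat.dvd_prime_pow hp).1 (Nat.gcd_dvd_left (p ^ k) m)
  have hfac := congrArg (·.factorization p) hj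
  simp only [Nat.factorization_gcd (pow_ne_zero k hp.ne_zero) hm, Finsupp.inf_apply,
    hp.factorization_pow, Finsupp.single_eq_same] at hfac
  rw [hj, hfac]

namespace IsMultiplicativeFn

theorem eq_of_eq_on_prime_pow {f g : ℕ → ℂ} (hf : IsMultiplicativeFn f)
    (hg : IsMultiplicativeFn g) (h : ∀ p k : ℕ, p.Prime → 0 < k → f (p ^ k) = g (p ^ k))
    {n : ℕ} (hn : n ≠ 0) : f n = g n := by
  induction n using Nat.recOnPosPrimePosCoprime with
  | prime_pow p k hp hk => exact h p k hp hk
  | zero => exact absurd rfl hn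
  | one => rw [hf.1, hg.1]
  | coprime a b ha hb hab iha ihb =>
    rw [hf.2 a b hab, hg.2 a b hab, iha (by omega), ihb (by omega)]

theorem comp_gcd {f : ℕ → ℂ} (hf : IsMultiplicativeFn f) (m : ℕ) :
    IsMultiplicativeFn (fun n ↦ f (Nat.gcd n m)) := by
  refine ⟨by simpa using hf.1, fun a b hab ↦ ?_⟩
  have hcop : Nat.Coprime (Nat.gcd a m) (Nat.gcd b m) :=
    (hab.coprime_dvd_left (Nat.gcd_dvd_left a m)).coprime_dvd_right (Nat.gcd_dvd_left b m)
  simp only [Nat.gcd_comm _ m, Nat.Coprime.gcd_mul m hab]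
  rw [← hf.2 _ _ (by simpa only [Nat.gcd_comm m] using hcop)]

end IsMultiplicativeFn

theorem stmt_14_general (f : ℕ → ℂ) (m : ℕ)
    (hmul : IsMultiplicativeFn f)
    (hii : ∀ p a : ℕ, p.Prime → p ^ a ∣ m → ¬ p ^ (a + 1) ∣ m →
      ∀ k : ℕ, a ≤ k → f (p ^ k) = f (p ^ a)) :
    (∀ n : ℕ, 1 ≤ n → f n = f (Nat.gcd n m)) ∧
    (∀ n : ℕ, 1 ≤ n → f (n + m) = f n) := by
  have hprime_pow (p k : ℕ) (hp : p.Prime) (_ : 0 < k) : f (p ^ k) = f (Nat.gcd (p ^ k) m) := by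
    rcases eq_or_ne m 0 with rfl | hm
    · rw [Nat.gcd_zero_right]
    rw [Nat.gcd_prime_pow_eq_pow_min hp hm]
    rcases le_total (m.factorization p) k with hak | hka
    · rw [min_eq_right hak]
      exact hii p _ hp (Nat.ordProj_dvd m p) (Nat.pow_succ_factorization_not_dvd hm hp) k hak
    · rw [min_eq_left hka]
  have hgcd (n : ℕ) (hn : 1 ≤ n) : f n = f (Nat.gcd n m) :=
    hmul.eq_of_eq_on_prime_pow (hmul.comp_gcd m) hprime_pow (by omega)
  refine ⟨hgcd, fun n hn ↦ ?_⟩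
  rw [hgcd (n + m) (by omega), hgcd n hn, Nat.gcd_add_self_left]

theorem stmt_14 (f : ℕ → ℂ) (m : ℕ) (hm : 1 ≤ m)
    (hmul : IsMultiplicativeFn f)
    (hii : ∀ p a : ℕ, p.Prime → p ^ a ∣ m → ¬ p ^ (a + 1) ∣ m →
      ∀ k : ℕ, a ≤ k → f (p ^ k) = f (p ^ a))
    (hiii : ∀ p : ℕ, p.Prime → Nat.Coprime p m → ∀ k : ℕ, 1 ≤ k → f (p ^ k) = 1) :
    (∀ n : ℕ, 1 ≤ n → f n = f (Nat.gcd n m)) ∧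
    (∀ n : ℕ, 1 ≤ n → f (n + m) = f n) :=
  stmt_14_general f m hmul hii
end

section
/- Let f : ℕ → ℝ be multiplicative with f(n)² ≤ 1 for all n ≥ 1, and suppose that for some prime q, ∑_{k=0}^∞ f(q^k)/q^k = 0. Then q = 2 and f(2^k) = −1 for all k ≥ 1. -/
/-!
Put `a k = f (q ^ k)`, so `a 0 = 1` and `-1 ≤ a k`. Since `∑ a k / q ^ k = 0`, the nonnegative
series `∑ (a k + 1) / q ^ k` sums to `∑ 1 / q ^ k = q / (q - 1)`, while its term at `k = 0` alone
is `2`. Hence `2 ≤ q / (q - 1)`, i.e. `q ≤ 2`; and for `q = 2` both sides equal `2`, which forces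
every other term `(a k + 1) / 2 ^ k` to vanish.
-/

section DivPow

variable {a : ℕ → ℝ} {q : ℝ}

lemma summable_div_pow_of_abs_le_one (hq : 1 < q) (ha : ∀ k, |a k| ≤ 1) :
    Summable fun k => a k / q ^ k := by
  have hgeo : Summable fun k : ℕ => (q⁻¹) ^ k :=
    summable_geometric_of_lt_one (by positivity) (inv_lt_one_of_one_lt₀ hq)
  refine Summable.of_norm_bounded hgeo fun k => ?_
  rw [Real.norm_eq_abs, abs_div, abs_of_pos (by positivity : (0 : ℝ) < q ^ k), inv_pow, ← one_div]
  exact div_le_div_of_nonneg_right (ha k) (by positivity)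

lemma tsum_add_one_div_pow_eq (hq : 1 < q) (ha : ∀ k, |a k| ≤ 1)
    (hz : ∑' k, a k / q ^ k = 0) : ∑' k, (a k + 1) / q ^ k = q / (q - 1) := by
  have hgeo : HasSum (fun k : ℕ => 1 / q ^ k) (1 - q⁻¹)⁻¹ := by
    simpa only [one_div, inv_pow] using
      hasSum_geometric_of_lt_one (by positivity) (inv_lt_one_of_one_lt₀ hq)
  have hsum := (summable_div_pow_of_abs_le_one hq ha).hasSum
  rw [hz] at hsum
  simp only [add_div]
  rw [(hsum.add hgeo).tsum_eq, zero_add]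
  have : q - 1 ≠ 0 := by linarith
  field_simp

lemma add_one_div_pow_nonneg (ha : ∀ k, |a k| ≤ 1) (hq : 0 < q) (k : ℕ) :
    0 ≤ (a k + 1) / q ^ k :=
  div_nonneg (by linarith [neg_abs_le (a k), ha k]) (by positivity)

lemma summable_add_one_div_pow (hq : 1 < q) (ha : ∀ k, |a k| ≤ 1) :
    Summable fun k => (a k + 1) / q ^ k := by
  have hone : Summable fun k : ℕ => (1 : ℝ) / q ^ k :=
    summable_div_pow_of_abs_le_one (a := fun _ => 1) hq (by simp)
  simpa only [add_div] using (summable_div_pow_of_abs_le_one hq ha).add hone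

lemma le_two_of_tsum_div_pow_eq_zero (hq : 1 < q) (ha : ∀ k, |a k| ≤ 1) (h0 : a 0 = 1)
    (hz : ∑' k, a k / q ^ k = 0) : q ≤ 2 := by
  have hterm : (a 0 + 1) / q ^ 0 ≤ ∑' k, (a k + 1) / q ^ k :=
    (summable_add_one_div_pow hq ha).le_tsum 0
      fun k _ => add_one_div_pow_nonneg ha (by linarith) k
  rw [tsum_add_one_div_pow_eq hq ha hz, h0, le_div_iff₀ (by linarith)] at hterm
  norm_num at hterm
  linarith

lemma eq_neg_one_of_tsum_div_two_pow_eq_zero (ha : ∀ k, |a k| ≤ 1) (h0 : a 0 = 1)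
    (hz : ∑' k, a k / 2 ^ k = 0) {k : ℕ} (hk : k ≠ 0) : a k = -1 := by
  have hq : (1 : ℝ) < 2 := one_lt_two
  have hpair : ∑ i ∈ {0, k}, (a i + 1) / 2 ^ i ≤ ∑' i, (a i + 1) / 2 ^ i :=
    (summable_add_one_div_pow hq ha).sum_le_tsum _
      fun i _ => add_one_div_pow_nonneg ha two_pos i
  rw [tsum_add_one_div_pow_eq hq ha hz, Finset.sum_pair hk.symm, h0] at hpair
  norm_num at hpair
  have hk_pos : (0 : ℝ) < 2 ^ k := by positivity
  have hk_nonpos : a k + 1 ≤ 0 := by simpa using (div_le_iff₀ hk_pos).mp hpair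
  linarith [neg_abs_le (a k), ha k]

end DivPow

theorem stmt_16 (f : ℕ → ℝ)
    (hmul : f 1 = 1 ∧ ∀ m n : ℕ, Nat.Coprime m n → f (m * n) = f m * f n)
    (hsq : ∀ n : ℕ, 1 ≤ n → f n ^ 2 ≤ 1)
    (q : ℕ) (hq : q.Prime)
    (hz : ∑' k : ℕ, f (q ^ k) / (q : ℝ) ^ k = 0) :
    q = 2 ∧ ∀ k : ℕ, 1 ≤ k → f (2 ^ k) = -1 := by
  have ha : ∀ k, |f (q ^ k)| ≤ 1 := fun k =>
    sq_le_one_iff_abs_le_one _ |>.mp (hsq _ (Nat.one_le_pow _ _ hq.pos))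
  have h0 : f (q ^ 0) = 1 := by simpa using hmul.1
  have hq_one : (1 : ℝ) < q := by exact_mod_cast hq.one_lt
  have hq_le : (q : ℝ) ≤ 2 := le_two_of_tsum_div_pow_eq_zero hq_one ha h0 hz
  obtain rfl : q = 2 := le_antisymm (by exact_mod_cast hq_le) hq.two_le
  refine ⟨rfl, fun k hk => ?_⟩
  push_cast at ha hz
  exact eq_neg_one_of_tsum_div_two_pow_eq_zero ha h0 hz (by omega)
end

section
/- Let f : ℕ → ℂ be the multiplicative function defined by f(p^k) = 1 for all primes p ≠ 3 and all k ≥ 1, and at powers of 3 by f(3) = 2, f(9) = −15, and f(3^k) = 0 for all k ≥ 3. Then f has period 27, f(27) = 0, and f has bounded partial sums. -/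
theorem Nat.gcd_pow_pow_eq_pow_min (q a b : ℕ) : Nat.gcd (q ^ a) (q ^ b) = q ^ min a b := by
  rcases le_total a b with hab | hba
  · rw [min_eq_left hab, Nat.gcd_eq_left (Nat.pow_dvd_pow q hab)]
  · rw [min_eq_right hba, Nat.gcd_eq_right (Nat.pow_dvd_pow q hba)]

theorem Nat.gcd_prime_pow_eq_pow_min_factorization {q n : ℕ} (hq : q.Prime) (hn : n ≠ 0)
    (K : ℕ) : n.gcd (q ^ K) = q ^ min (n.factorization q) K := by
  have hcop : (n / q ^ n.factorization q).Coprime (q ^ K) :=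
    ((Nat.coprime_ordCompl hq hn).pow_left K).symm
  conv_lhs => rw [← Nat.ordProj_mul_ordCompl_eq_self n q]
  rw [hcop.gcd_mul_right_cancel, Nat.gcd_pow_pow_eq_pow_min]

namespace IsMultiplicativeFn

variable {f : ℕ → ℂ} {q : ℕ}

theorem apply_eq_one_of_not_dvd (hmul : IsMultiplicativeFn f)
    (hf : ∀ p : ℕ, p.Prime → p ≠ q → ∀ k : ℕ, 1 ≤ k → f (p ^ k) = 1) {n : ℕ} (hn : ¬ q ∣ n) :
    f n = 1 := by
  induction n using Nat.recOnPosPrimePosCoprime with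
  | prime_pow p k hp hk =>
    exact hf p hp (by rintro rfl; exact hn (dvd_pow_self p hk.ne')) k hk
  | zero => exact absurd (dvd_zero q) hn
  | one => exact hmul.1
  | coprime a b _ _ hab iha ihb =>
    rw [hmul.2 a b hab, iha (fun h => hn (h.mul_right b)), ihb (fun h => hn (h.mul_left a)),
      one_mul]

theorem apply_eq_apply_ordProj (hmul : IsMultiplicativeFn f) (hq : q.Prime)
    (hf : ∀ p : ℕ, p.Prime → p ≠ q → ∀ k : ℕ, 1 ≤ k → f (p ^ k) = 1) {n : ℕ} (hn : n ≠ 0) :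
    f n = f (q ^ n.factorization q) := by
  conv_lhs => rw [← Nat.ordProj_mul_ordCompl_eq_self n q]
  rw [hmul.2 _ _ ((Nat.coprime_ordCompl hq hn).pow_left _),
    hmul.apply_eq_one_of_not_dvd hf (Nat.not_dvd_ordCompl hq hn), mul_one]

theorem apply_eq_apply_gcd_s18 (hmul : IsMultiplicativeFn f) (hq : q.Prime)
    (hf : ∀ p : ℕ, p.Prime → p ≠ q → ∀ k : ℕ, 1 ≤ k → f (p ^ k) = 1) {K : ℕ}
    (hK : ∀ k : ℕ, K ≤ k → f (q ^ k) = f (q ^ K)) {n : ℕ} (hn : n ≠ 0) :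
    f n = f (n.gcd (q ^ K)) := by
  rw [Nat.gcd_prime_pow_eq_pow_min_factorization hq hn, hmul.apply_eq_apply_ordProj hq hf hn]
  rcases le_total (n.factorization q) K with h | h
  · rw [min_eq_left h]
  · rw [min_eq_right h, hK _ h]

end IsMultiplicativeFn

section PeriodicSums

variable {g : ℕ → ℂ} {m : ℕ}

theorem sum_Icc_one_add_period (hg : ∀ n : ℕ, 1 ≤ n → g (n + m) = g n)
    (hsum : ∑ n ∈ Finset.Icc 1 m, g n = 0) (N : ℕ) :
    ∑ n ∈ Finset.Icc 1 (N + m), g n = ∑ n ∈ Finset.Icc 1 N, g n := by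
  induction N with
  | zero => simpa using hsum
  | succ N ih =>
    rw [Nat.add_right_comm N 1 m, Finset.sum_Icc_succ_top (by omega),
      Finset.sum_Icc_succ_top (by omega), ih, Nat.add_right_comm N m 1, hg _ (by omega)]

theorem hasBoundedPartialSums_of_periodic (hm : 0 < m) (hg : ∀ n : ℕ, 1 ≤ n → g (n + m) = g n)
    (hsum : ∑ n ∈ Finset.Icc 1 m, g n = 0) : HasBoundedPartialSums g := by
  set S : ℕ → ℂ := fun N => ∑ n ∈ Finset.Icc 1 N, g n
  have hS : Function.Periodic S m := sum_Icc_one_add_period hg hsum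
  refine ⟨1 + ∑ r ∈ Finset.range m, ‖S r‖, by positivity, fun N _ => ?_⟩
  calc ‖S N‖ = ‖S (N % m)‖ := by rw [hS.map_mod_nat]
    _ ≤ ∑ r ∈ Finset.range m, ‖S r‖ :=
      Finset.single_le_sum (fun r _ => norm_nonneg (S r)) (Finset.mem_range.2 (Nat.mod_lt N hm))
    _ ≤ 1 + ∑ r ∈ Finset.range m, ‖S r‖ := le_add_of_nonneg_left zero_le_one

end PeriodicSums

theorem stmt_18 (f : ℕ → ℂ)
    (hmul : IsMultiplicativeFn f)
    (hfp : ∀ p : ℕ, p.Prime → p ≠ 3 → ∀ k : ℕ, 1 ≤ k → f (p ^ k) = 1)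
    (hf3 : f 3 = 2) (hf9 : f 9 = -15)
    (hf3k : ∀ k : ℕ, 3 ≤ k → f (3 ^ k) = 0) :
    (∀ n : ℕ, 1 ≤ n → f (n + 27) = f n) ∧ f 27 = 0 ∧ HasBoundedPartialSums f := by
  have hf27 : f 27 = 0 := hf3k 3 le_rfl
  have hgcd : ∀ n : ℕ, 1 ≤ n → f n = f (n.gcd 27) := fun n hn =>
    hmul.apply_eq_apply_gcd_s18 (K := 3) Nat.prime_three hfp
      (fun k hk => by rw [hf3k k hk, hf3k 3 le_rfl]) (by omega)
  have hper : ∀ n : ℕ, 1 ≤ n → f (n + 27) = f n := fun n hn => by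
    rw [hgcd n hn, hgcd (n + 27) (by omega), Nat.gcd_add_self_left]
  have hsum : ∑ n ∈ Finset.Icc 1 27, f n = 0 := by
    rw [Finset.sum_congr rfl fun n hn => hgcd n (Finset.mem_Icc.1 hn).1]
    norm_num [Finset.sum_Icc_succ_top, hmul.1, hf3, hf9, hf27]
  exact ⟨hper, hf27, hasBoundedPartialSums_of_periodic (by norm_num) hper hsum⟩
end

section
/- Let f : ℕ → ℂ be the multiplicative function defined by f(p^k) = 1 for all primes p ≠ 5 and all k ≥ 1, and at powers of 5 by f(5) = π and f(5^k) = −20 − 4π for all k ≥ 2. Then f has period 25, f(25) ≠ 0, and f has bounded partial sums. -/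
/-!
By multiplicativity, `f n = f (5 ^ v₅(n))`, so `f n` is `1`, `π` or `-20 - 4π` according as
`v₅(n)` is `0`, `1` or at least `2`; this depends only on `n mod 25`. Over one period there are
20 values `1`, 4 values `π` and one value `-20 - 4π`, which sum to `0`, so the partial sums are
bounded by the sum of `‖f n‖` over one period.
-/

open Finset

theorem IsMultiplicativeFn.eq_apply_pow_factorization {f : ℕ → ℂ} (hmul : IsMultiplicativeFn f)
    {q : ℕ} (hf : ∀ p : ℕ, p.Prime → p ≠ q → ∀ k : ℕ, 1 ≤ k → f (p ^ k) = 1)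
    {n : ℕ} (hn : n ≠ 0) : f n = f (q ^ n.factorization q) := by
  rw [Nat.multiplicative_factorization f hmul.2 hmul.1 hn]
  refine Finsupp.prod_eq_single q (fun p hp hpq => ?_) fun _ => by rw [pow_zero, hmul.1]
  have hprime : p.Prime :=
    Nat.prime_of_mem_primeFactors (Nat.support_factorization n ▸ Finsupp.mem_support_iff.2 hp)
  exact hf p hprime hpq _ (Nat.one_le_iff_ne_zero.2 hp)

section PeriodicSums

variable {M : Type*} [AddCommMonoid M]

theorem sum_Icc_one_eq_sum_range (a : ℕ → M) (N : ℕ) :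
    ∑ n ∈ Icc 1 N, a n = ∑ n ∈ range N, a (n + 1) := by
  rw [← Ico_add_one_right_eq_Icc, sum_Ico_eq_sum_range]
  simp [add_comm]

theorem sum_range_add_period {a : ℕ → M} {m : ℕ} (ha : Function.Periodic a m)
    (hblock : ∑ i ∈ range m, a i = 0) (N : ℕ) :
    ∑ i ∈ range (m + N), a i = ∑ i ∈ range N, a i := by
  rw [sum_range_add, hblock, zero_add]
  exact sum_congr rfl fun i _ => by rw [add_comm, ha]

theorem sum_range_mod_period {a : ℕ → M} {m : ℕ} (ha : Function.Periodic a m)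
    (hblock : ∑ i ∈ range m, a i = 0) (N : ℕ) :
    ∑ i ∈ range N, a i = ∑ i ∈ range (N % m), a i := by
  conv_lhs => rw [← Nat.mod_add_div N m]
  induction N / m with
  | zero => rw [mul_zero, add_zero]
  | succ q ih => rw [mul_add_one, ← add_assoc, add_comm, sum_range_add_period ha hblock, ih]

theorem norm_sum_range_le_of_periodic {E : Type*} [SeminormedAddCommGroup E] {a : ℕ → E} {m : ℕ}
    (hm : 0 < m) (ha : Function.Periodic a m) (hblock : ∑ i ∈ range m, a i = 0) (N : ℕ) :
    ‖∑ i ∈ range N, a i‖ ≤ ∑ i ∈ range m, ‖a i‖ := by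
  rw [sum_range_mod_period ha hblock]
  refine (norm_sum_le _ _).trans (sum_le_sum_of_subset_of_nonneg ?_ fun _ _ _ => norm_nonneg _)
  exact range_subset_range.2 (Nat.mod_lt N hm).le

end PeriodicSums

theorem hasBoundedPartialSums_of_periodic_s19 {a : ℕ → ℂ} {m : ℕ} (hm : 0 < m)
    (ha : Function.Periodic a m) (hblock : ∑ i ∈ Icc 1 m, a i = 0) :
    HasBoundedPartialSums a := by
  refine ⟨∑ i ∈ range m, ‖a (i + 1)‖ + 1, by positivity, fun N _ => ?_⟩
  rw [sum_Icc_one_eq_sum_range] at hblock ⊢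
  exact (norm_sum_range_le_of_periodic hm (ha.add_const 1) hblock N).trans
    (le_add_of_nonneg_right zero_le_one)

theorem HasBoundedPartialSums.congr_s19 {f g : ℕ → ℂ} (hf : HasBoundedPartialSums f)
    (hfg : ∀ n, 1 ≤ n → f n = g n) : HasBoundedPartialSums g := by
  obtain ⟨C, hC, hbound⟩ := hf
  refine ⟨C, hC, fun N hN => ?_⟩
  rw [← sum_congr rfl fun n hn => hfg n (mem_Icc.1 hn).1]
  exact hbound N hN

-- The closed form of `f`, which depends only on `min (v₅ n) 2`.
noncomputable def model25 (n : ℕ) : ℂ :=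
  if 25 ∣ n then -20 - 4 * Real.pi else if 5 ∣ n then Real.pi else 1

theorem model25_periodic : Function.Periodic model25 25 := fun n => by
  simp only [model25, Nat.dvd_add_self_right, show (5 ∣ n + 25) ↔ 5 ∣ n by omega]

theorem sum_Icc_model25 : ∑ n ∈ Icc 1 25, model25 n = 0 := by
  rw [sum_Icc_one_eq_sum_range]
  norm_num [sum_range_succ, model25]
  ring

theorem IsMultiplicativeFn.eq_model25 {f : ℕ → ℂ} (hmul : IsMultiplicativeFn f)
    (hfp : ∀ p : ℕ, p.Prime → p ≠ 5 → ∀ k : ℕ, 1 ≤ k → f (p ^ k) = 1)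
    (hf5 : f 5 = (Real.pi : ℂ))
    (hf5k : ∀ k : ℕ, 2 ≤ k → f (5 ^ k) = -20 - 4 * (Real.pi : ℂ)) {n : ℕ} (hn : n ≠ 0) :
    f n = model25 n := by
  have hprime : Nat.Prime 5 := by norm_num
  have h25 : 25 ∣ n ↔ 2 ≤ n.factorization 5 := hprime.pow_dvd_iff_le_factorization (k := 2) hn
  have h5dvd : 5 ∣ n ↔ 1 ≤ n.factorization 5 := hprime.dvd_iff_one_le_factorization hn
  simp only [hmul.eq_apply_pow_factorization hfp hn, model25, h25, h5dvd]
  obtain h | h | h :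
      n.factorization 5 = 0 ∨ n.factorization 5 = 1 ∨ 2 ≤ n.factorization 5 := by
    omega
  · simp [h, hmul.1]
  · simp [h, hf5]
  · simp [h, hf5k _ h]

theorem stmt_19 (f : ℕ → ℂ)
    (hmul : IsMultiplicativeFn f)
    (hfp : ∀ p : ℕ, p.Prime → p ≠ 5 → ∀ k : ℕ, 1 ≤ k → f (p ^ k) = 1)
    (hf5 : f 5 = (Real.pi : ℂ))
    (hf5k : ∀ k : ℕ, 2 ≤ k → f (5 ^ k) = -20 - 4 * (Real.pi : ℂ)) :
    (∀ n : ℕ, 1 ≤ n → f (n + 25) = f n) ∧ f 25 ≠ 0 ∧ HasBoundedPartialSums f := by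
  have hf (n : ℕ) (hn : 1 ≤ n) : f n = model25 n := hmul.eq_model25 hfp hf5 hf5k (by omega)
  refine ⟨fun n hn => ?_, ?_, ?_⟩
  · rw [hf n hn, hf (n + 25) (by omega), model25_periodic]
  · rw [show 25 = 5 ^ 2 by rfl, hf5k 2 le_rfl]
    exact_mod_cast (by linarith [Real.pi_pos] : -20 - 4 * Real.pi ≠ 0)
  · exact (hasBoundedPartialSums_of_periodic_s19 (by norm_num) model25_periodic sum_Icc_model25).congr_s19
      fun n hn => (hf n hn).symm
end
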